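/- For a ≤ b, c ≤ e, and any (x1,x2,x3) ∈ ℕ^3 with x2 + b ≥ d: (x1,x2,x3)·3^a 2^b 3^c 1^d 2^e = (x1+d, x2+b−d+e, max(0, c−e, x3+a−b+c−e)). -/

import Mathlib

/-! Each block `j^n` of the word acts by a closed formula: `3^n` adds `n` to `x₃`, `2^n` moves `n`
from `x₃` to `x₂` (truncated at `0`), and `1^n` moves `n` from `x₂` to `x₁` as long as `n ≤ x₂`,
which is what `d ≤ x₂ + b` guarantees for the block `1^d`. Composing the five formulas leaves
`x₃ + a - b + c - e` in ℕ, whose two truncations are the maximum in the statement. -/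

/-- Action of a letter of `{1,2,3}` (encoded as `Fin 3`) on a row identified
with its multiplicity vector `(x₁,x₂,x₃) ∈ ℕ³`. -/
def act3 (x : ℕ × ℕ × ℕ) (j : Fin 3) : ℕ × ℕ × ℕ :=
  if j = 0 then
    if 0 < x.2.1 then (x.1 + 1, x.2.1 - 1, x.2.2)
    else if 0 < x.2.2 then (x.1 + 1, x.2.1, x.2.2 - 1)
    else (x.1 + 1, x.2.1, x.2.2)
  else if j = 1 then (x.1, x.2.1 + 1, x.2.2 - 1)
  else (x.1, x.2.1, x.2.2 + 1)

/-- Action of a word, composing letter actions from left to right. -/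
def actW3 (x : ℕ × ℕ × ℕ) (w : List (Fin 3)) : ℕ × ℕ × ℕ :=
  w.foldl act3 x

lemma act3_zero_of_pos {x : ℕ × ℕ × ℕ} (h : 0 < x.2.1) :
    act3 x 0 = (x.1 + 1, x.2.1 - 1, x.2.2) := by
  simp [act3, h]

lemma act3_one (x : ℕ × ℕ × ℕ) : act3 x 1 = (x.1, x.2.1 + 1, x.2.2 - 1) := rfl

lemma act3_two (x : ℕ × ℕ × ℕ) : act3 x 2 = (x.1, x.2.1, x.2.2 + 1) := rfl

lemma actW3_append (x : ℕ × ℕ × ℕ) (v w : List (Fin 3)) :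
    actW3 x (v ++ w) = actW3 (actW3 x v) w :=
  List.foldl_append

lemma actW3_replicate_succ (x : ℕ × ℕ × ℕ) (j : Fin 3) (n : ℕ) :
    actW3 x (List.replicate (n + 1) j) = act3 (actW3 x (List.replicate n j)) j := by
  rw [List.replicate_succ', actW3_append]
  rfl

lemma actW3_replicate_zero {x1 x2 x3 n : ℕ} (h : n ≤ x2) :
    actW3 (x1, x2, x3) (List.replicate n 0) = (x1 + n, x2 - n, x3) := by
  induction n with
  | zero => rfl
  | succ n ih =>
    rw [actW3_replicate_succ, ih (by omega), act3_zero_of_pos (by dsimp; omega)]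
    simp only [Nat.sub_sub]
    rfl

lemma actW3_replicate_one (x1 x2 x3 n : ℕ) :
    actW3 (x1, x2, x3) (List.replicate n 1) = (x1, x2 + n, x3 - n) := by
  induction n with
  | zero => rfl
  | succ n ih =>
    rw [actW3_replicate_succ, ih, act3_one]
    simp only [Nat.sub_sub]
    rfl

lemma actW3_replicate_two (x1 x2 x3 n : ℕ) :
    actW3 (x1, x2, x3) (List.replicate n 2) = (x1, x2, x3 + n) := by
  induction n with
  | zero => rfl
  | succ n ih =>
    rw [actW3_replicate_succ, ih, act3_two]
    rfl

theorem act_case1_general (a b c d e x1 x2 x3 : ℕ)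
    (hx : d ≤ x2 + b) :
    actW3 (x1, x2, x3)
        (List.replicate a 2 ++ List.replicate b 1 ++ List.replicate c 2 ++
          List.replicate d 0 ++ List.replicate e 1) =
      (x1 + d, x2 + b - d + e,
        (((c : ℤ) - e) ⊔ ((x3 : ℤ) + a - b + c - e)).toNat) := by
  simp only [actW3_append, actW3_replicate_two, actW3_replicate_one,
    actW3_replicate_zero hx, Prod.mk.injEq, true_and]
  omega

/-- explicit value of the action of `3^a 2^b 3^c 1^d 2^e`
when `x₂ + b ≥ d` (Case 1). -/
theorem act_case1 (a b c d e x1 x2 x3 : ℕ) (hab : a ≤ b) (hce : c ≤ e)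
    (hx : d ≤ x2 + b) :
    actW3 (x1, x2, x3)
        (List.replicate a 2 ++ List.replicate b 1 ++ List.replicate c 2 ++
          List.replicate d 0 ++ List.replicate e 1) =
      (x1 + d, x2 + b - d + e,
        (((c : ℤ) - e) ⊔ ((x3 : ℤ) + a - b + c - e)).toNat) :=
  act_case1_general a b c d e x1 x2 x3 hx
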